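/- arXiv:2009.14583 — 4 statements merged into one kernel-verified Lean document; each statement's English description precedes it below -/
import Mathlib

section
/- For every real α > 0 and every integer k ≥ 1, there exists n₀ such that for all n ≥ n₀ the following holds: if G is a graph on n vertices with minimum degree δ(G) ≥ αn, then there exists a partition V(G) = U₁ ∪ U₂ ∪ ... ∪ U_k such that (1) every part U_i has size ⌊n/k⌋ or ⌈n/k⌉, and (2) every vertex v ∈ V(G) has at least (α/2)·|U_i| neighbors in U_i, for every i ∈ [k]. -/
/-!
Colour the vertices uniformly at random with `k` colours, i.e. count colourings `V → Fin k`.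
Exponential-moment (Chernoff) bounds show that all but an exponentially small fraction of them
give every vertex at least `5αn/(8k)` neighbours of each colour (because `5 log 2 / 8 < 1/2`)
and have all colour classes of size at most `n/k + εn`, `ε = α/(16k²)`; a union bound over the
`(n + 1)k` bad events leaves a good colouring. Rebalancing it to class sizes `⌊n/k⌋, ⌈n/k⌉`
recolours at most `k(εn + 1)` vertices, so every vertex keeps at least
`5αn/(8k) - αn/(16k) - k ≥ (α/2)(n/k + 1)` neighbours in each class once `n` is large.
-/

open Finset Real Filter

section
variable {V : Type*} [Fintype V] [DecidableEq V] {k : ℕ}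

lemma sum_exp_mul_card_filter_eq (N : Finset V) (i : Fin k) (t : ℝ) :
    ∑ f : V → Fin k, exp (t * #{u ∈ N | f u = i}) =
      (k - 1 + exp t) ^ #N * k ^ (Fintype.card V - #N) := by
  set w : V → Fin k → ℝ := fun u j => if u ∈ N then (if j = i then exp t else 1) else 1
  have hf (f : V → Fin k) : exp (t * #{u ∈ N | f u = i}) = ∏ u, w u (f u) := by
    rw [Fintype.prod_ite_mem, ← prod_filter, prod_const, mul_comm, exp_nat_mul]
  have hu (u : V) : ∑ j, w u j = if u ∈ N then k - 1 + exp t else (k : ℝ) := by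
    simp only [w]
    split_ifs
    · rw [sum_ite, filter_eq', filter_ne', sum_const, sum_const, card_erase_of_mem (mem_univ i)]
      simp [Nat.cast_sub (Fin.pos i), add_comm]
    · simp
  simp_rw [hf, ← Fintype.prod_sum w, hu]
  rw [prod_ite, prod_const, prod_const, filter_mem_eq_inter, univ_inter,
    filter_not, filter_mem_eq_inter, univ_inter, card_sdiff, card_univ, inter_univ]

lemma card_filter_le_pow_mul_exp (hk : 0 < k) (N : Finset V) (i : Fin k) (t a : ℝ) :
    (#{f : V → Fin k | a ≤ t * #{u ∈ N | f u = i}} : ℝ) ≤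
      k ^ Fintype.card V * exp (-a + (exp t - 1) * #N / k) := by
  have hk1 : (1 : ℝ) ≤ k := by exact_mod_cast hk
  have hmarkov : (#{f : V → Fin k | a ≤ t * #{u ∈ N | f u = i}} : ℝ) * exp a ≤
      ∑ f : V → Fin k, exp (t * #{u ∈ N | f u = i}) := by
    rw [← nsmul_eq_mul]
    refine (card_nsmul_le_sum _ _ _ fun f hf => exp_le_exp.2 (mem_filter.1 hf).2).trans ?_
    exact sum_le_sum_of_subset_of_nonneg (subset_univ _) fun _ _ _ => (exp_pos _).le
  have hbase : (k : ℝ) - 1 + exp t ≤ k * exp ((exp t - 1) / k) :=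
    calc (k : ℝ) - 1 + exp t = k * ((exp t - 1) / k + 1) := by field_simp; ring
      _ ≤ k * exp ((exp t - 1) / k) := by gcongr; exact add_one_le_exp _
  have hpow : (k : ℝ) ^ #N * k ^ (Fintype.card V - #N) = k ^ Fintype.card V := by
    rw [← pow_add, Nat.add_sub_cancel' (card_le_univ N)]
  rw [sum_exp_mul_card_filter_eq] at hmarkov
  calc (#{f : V → Fin k | a ≤ t * #{u ∈ N | f u = i}} : ℝ)
      = #{f : V → Fin k | a ≤ t * #{u ∈ N | f u = i}} * exp a * exp (-a) := by
        rw [mul_assoc, ← exp_add, add_neg_cancel, exp_zero, mul_one]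
    _ ≤ (k * exp ((exp t - 1) / k)) ^ #N * k ^ (Fintype.card V - #N) * exp (-a) := by
        refine mul_le_mul_of_nonneg_right (hmarkov.trans ?_) (exp_pos _).le
        gcongr
    _ = k ^ Fintype.card V * exp (-a + (exp t - 1) * #N / k) := by
        rw [mul_pow, ← exp_nat_mul, exp_add, ← hpow]
        ring_nf

lemma card_filter_card_filter_lt_le (hk : 0 < k) {α c : ℝ} (N : Finset V)
    (hN : α * Fintype.card V ≤ #N) (i : Fin k) :
    (#{f : V → Fin k | #{u ∈ N | f u = i} < c * Fintype.card V} : ℝ) ≤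
      k ^ Fintype.card V * exp (-(α / (2 * k) - c * log 2) * Fintype.card V) := by
  calc (#{f : V → Fin k | #{u ∈ N | f u = i} < c * Fintype.card V} : ℝ)
      ≤ #{f : V → Fin k | -log 2 * (c * Fintype.card V) ≤ -log 2 * #{u ∈ N | f u = i}} := by
        gcongr with f
        exact fun hf => mul_le_mul_of_nonpos_left hf.le (neg_nonpos.2 (log_nonneg one_le_two))
    _ ≤ _ := card_filter_le_pow_mul_exp hk N i _ _
    _ ≤ _ := by
        gcongr ?_ * exp ?_
        rw [exp_neg, exp_log two_pos]
        have : α * Fintype.card V / (2 * k) ≤ #N / (2 * k) := by gcongr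
        field_simp
        linarith

lemma card_filter_lt_card_filter_le (hk : 0 < k) {ε θ : ℝ} (hθ : 0 ≤ θ) (hθ1 : θ ≤ 1)
    (i : Fin k) :
    (#{f : V → Fin k | Fintype.card V / k + ε * Fintype.card V < #{u | f u = i}} : ℝ) ≤
      k ^ Fintype.card V * exp (-(θ * ε - θ ^ 2 / k) * Fintype.card V) := by
  calc (#{f : V → Fin k | Fintype.card V / k + ε * Fintype.card V < #{u | f u = i}} : ℝ)
      ≤ #{f : V → Fin k | θ * (Fintype.card V / k + ε * Fintype.card V) ≤
          θ * #{u ∈ univ | f u = i}} := by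
        gcongr with f
        exact fun hf => mul_le_mul_of_nonneg_left hf.le hθ
    _ ≤ _ := card_filter_le_pow_mul_exp hk univ i _ _
    _ ≤ _ := by
        gcongr ?_ * exp ?_
        have hexp : exp θ - 1 - θ ≤ θ ^ 2 :=
          (le_abs_self _).trans (abs_exp_sub_one_sub_id_le (abs_le.2 ⟨by linarith, hθ1⟩))
        have : (exp θ - 1 - θ) * Fintype.card V / k ≤ θ ^ 2 * Fintype.card V / k := by gcongr
        rw [card_univ]
        field_simp
        field_simp at this
        linarith

end

lemma exists_forall_notMem_of_sum_card_lt {α ι : Type*} [Fintype α] [DecidableEq α] [Fintype ι]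
    (B : ι → Finset α) (h : ∑ j, #(B j) < Fintype.card α) : ∃ a, ∀ j, a ∉ B j := by
  obtain ⟨a, -, ha⟩ := exists_mem_notMem_of_card_lt_card (card_biUnion_le.trans_lt h)
  exact ⟨a, fun j hj => ha (mem_biUnion.2 ⟨j, mem_univ _, hj⟩)⟩

lemma eventually_mul_exp_neg_lt_one {γ : ℝ} (hγ : 0 < γ) (a b : ℝ) :
    ∀ᶠ n : ℕ in atTop, (a * n + b) * exp (-γ * n) < 1 := by
  have hr : exp (-γ) < 1 := exp_lt_one_iff.2 (neg_lt_zero.2 hγ)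
  have hlim :
      Tendsto (fun n : ℕ => a * (n * exp (-γ) ^ n) + b * exp (-γ) ^ n) atTop (nhds 0) := by
    simpa using ((tendsto_self_mul_const_pow_of_lt_one (exp_pos _).le hr).const_mul a).add
      ((tendsto_pow_atTop_nhds_zero_of_lt_one (exp_pos _).le hr).const_mul b)
  filter_upwards [hlim.eventually_lt_const one_pos] with n hn
  calc (a * n + b) * exp (-γ * n) = a * (n * exp (-γ) ^ n) + b * exp (-γ) ^ n := by
        rw [← exp_nat_mul, mul_comm (-γ)]; ring
    _ < 1 := hn

lemma exists_coloring_le_card_neighborFinset_filter {k : ℕ} (hk : 0 < k) {α c ε : ℝ}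
    (hc : c * log 2 < α / (2 * k)) (hε : 0 < ε) :
    ∃ n₀ : ℕ, ∀ (V : Type*) [Fintype V] [DecidableEq V] (G : SimpleGraph V)
      [DecidableRel G.Adj], n₀ ≤ Fintype.card V →
      (∀ v, α * Fintype.card V ≤ G.degree v) →
      ∃ f : V → Fin k,
        (∀ v i, c * Fintype.card V ≤ #{u ∈ G.neighborFinset v | f u = i}) ∧
        ∀ i, (#{u | f u = i} : ℝ) ≤ Fintype.card V / k + ε * Fintype.card V := by
  -- `θ ≤ kε/2` keeps the second-order term `θ²/k` of the upper tail below `θε/2`.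
  set θ := min 1 (k * ε / 2)
  set γ := min (α / (2 * k) - c * log 2) (θ * ε - θ ^ 2 / k)
  have hk' : (0 : ℝ) < k := by exact_mod_cast hk
  have hθ : 0 < θ := lt_min one_pos (by positivity)
  have hγ : 0 < γ := by
    refine lt_min (by linarith) ?_
    have : θ ≤ k * ε / 2 := min_le_right _ _
    have : θ / k ≤ ε / 2 := by rw [div_le_iff₀ hk']; linarith
    have : θ * ε - θ ^ 2 / k = θ * (ε - θ / k) := by ring
    rw [this]
    exact mul_pos hθ (by linarith)
  obtain ⟨n₀, hn₀⟩ := eventually_atTop.1 (eventually_mul_exp_neg_lt_one hγ k k)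
  refine ⟨n₀, fun V _ _ G _ hn hδ => ?_⟩
  set n := Fintype.card V
  let B : (V × Fin k) ⊕ Fin k → Finset (V → Fin k) :=
    Sum.elim (fun p => ({f | #{u ∈ G.neighborFinset p.1 | f u = p.2} < c * n} : Finset _))
      (fun i => ({f | n / k + ε * n < #{u | f u = i}} : Finset _))
  have hB (j) : (#(B j) : ℝ) ≤ k ^ n * exp (-γ * n) := by
    rcases j with ⟨v, i⟩ | i
    · refine (card_filter_card_filter_lt_le (α := α) hk _ ?_ i).trans ?_
      · rw [G.card_neighborFinset_eq_degree]; exact hδ v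
      · gcongr; exact min_le_left _ _
    · refine (card_filter_lt_card_filter_le hk hθ.le (min_le_left _ _) i).trans ?_
      gcongr; exact min_le_right _ _
  obtain ⟨f, hf⟩ := exists_forall_notMem_of_sum_card_lt B <| by
    rw [← Nat.cast_lt (α := ℝ), Nat.cast_sum, Fintype.card_fun, Fintype.card_fin,
      Nat.cast_pow]
    calc ∑ j, (#(B j) : ℝ) ≤ (n * k + k) • (k ^ n * exp (-γ * n)) := by
          simpa using sum_le_card_nsmul univ _ _ fun j _ => hB j
      _ = k ^ n * ((k * n + k) * exp (-γ * n)) := by rw [nsmul_eq_mul]; push_cast; ring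
      _ < k ^ n * 1 := by gcongr; exact hn₀ n hn
      _ = k ^ n := mul_one _
  refine ⟨f, fun v i => ?_, fun i => ?_⟩
  · simpa [B] using hf (.inl (v, i))
  · simpa [B] using hf (.inr i)

lemma exists_eq_of_notMem_card_filter_eq {V ι : Type*} [DecidableEq V] [Fintype ι]
    [DecidableEq ι] (R : Finset V) (c : ι → ℕ) (hc : ∑ i, c i = #R) (f : V → ι) :
    ∃ g : V → ι, (∀ v ∉ R, g v = f v) ∧ ∀ i, #{v ∈ R | g v = i} = c i := by
  let e : R ≃ Σ i, Fin (c i) := Fintype.equivOfCardEq (by simp [hc])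
  refine ⟨fun v => if hv : v ∈ R then (e ⟨v, hv⟩).1 else f v, fun v hv => dif_neg hv,
    fun i => ?_⟩
  calc #{v ∈ R | (if hv : v ∈ R then (e ⟨v, hv⟩).1 else f v) = i}
      = Fintype.card {x : R // (e x).1 = i} := by
        rw [Fintype.card_subtype, ← card_map (Function.Embedding.subtype _)]
        congr 1
        ext v
        by_cases hv : v ∈ R <;> simp [hv]
    _ = Fintype.card {y : Σ j, Fin (c j) // y.1 = i} :=
        Fintype.card_congr (e.subtypeEquivOfSubtype (p := fun y => y.1 = i))
    _ = c i := by rw [Fintype.card_congr (Equiv.sigmaSubtype i), Fintype.card_fin]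

section
variable {V ι : Type*} [Fintype V] [DecidableEq V] [Fintype ι] [DecidableEq ι]

lemma exists_eqOn_card_fiber_eq (S : Finset V) (f : V → ι) (t : ι → ℕ)
    (ht : ∑ i, t i = Fintype.card V) (hS : ∀ i, #{v ∈ S | f v = i} ≤ t i) :
    ∃ g : V → ι, (∀ v ∈ S, g v = f v) ∧ ∀ i, #{v | g v = i} = t i := by
  have hc : ∑ i, (t i - #{v ∈ S | f v = i}) = #Sᶜ := by
    rw [sum_tsub_distrib _ fun i _ => hS i, ht,
      ← card_eq_sum_card_fiberwise fun v _ => mem_univ (f v), card_compl]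
  obtain ⟨g, hgf, hg⟩ := exists_eq_of_notMem_card_filter_eq Sᶜ _ hc f
  have hgS : ∀ v ∈ S, g v = f v := fun v hv => hgf v (notMem_compl.2 hv)
  refine ⟨g, hgS, fun i => ?_⟩
  have hin : #{v | g v = i ∧ v ∈ S} = #{v ∈ S | f v = i} := by
    congr 1; ext v
    simp only [mem_filter, mem_univ, true_and]
    exact ⟨fun h => ⟨h.2, (hgS v h.2).symm.trans h.1⟩,
      fun h => ⟨(hgS v h.1).trans h.2, h.1⟩⟩
  have hout : #{v | g v = i ∧ v ∉ S} = #{v ∈ Sᶜ | g v = i} := by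
    congr 1; ext v; simp [and_comm]
  rw [← card_filter_add_card_filter_not (s := {v | g v = i}) (· ∈ S), filter_filter,
    filter_filter, hin, hout, hg, Nat.add_sub_cancel' (hS i)]

lemma exists_card_fiber_eq_card_ne_le (f : V → ι) (t : ι → ℕ)
    (ht : ∑ i, t i = Fintype.card V) :
    ∃ g : V → ι, (∀ i, #{v | g v = i} = t i) ∧
      #{v | f v ≠ g v} ≤ ∑ i, (#{v | f v = i} - t i) := by
  -- Keep `min |f⁻¹ i| (t i)` vertices of each class `i` and recolour all the others.
  choose A hAf hAcard using fun i =>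
    exists_subset_card_eq (s := {v | f v = i}) (min_le_left _ (t i))
  set S := univ.biUnion A
  have hSf (i : ι) : ({v ∈ S | f v = i} : Finset V) = A i := by
    ext v
    simp only [S, mem_filter, mem_biUnion, mem_univ, true_and]
    constructor
    · rintro ⟨⟨j, hj⟩, rfl⟩
      rwa [(mem_filter.1 (hAf j hj)).2]
    · exact fun hv => ⟨⟨i, hv⟩, (mem_filter.1 (hAf i hv)).2⟩
  obtain ⟨g, hgS, hg⟩ := exists_eqOn_card_fiber_eq S f t ht fun i => by
    rw [hSf, hAcard]; exact min_le_right _ _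
  have hS : #S = ∑ i, min #{v | f v = i} (t i) := by
    rw [card_eq_sum_card_fiberwise fun v _ => mem_univ (f v)]
    simp_rw [hSf, hAcard]
  have hV : Fintype.card V = ∑ i, #{v | f v = i} := by
    rw [← card_univ, card_eq_sum_card_fiberwise fun v _ => mem_univ (f v)]
  refine ⟨g, hg, ?_⟩
  calc #{v | f v ≠ g v} ≤ #Sᶜ := card_le_card fun v hv =>
        mem_compl.2 fun hvS => (mem_filter.1 hv).2 (hgS v hvS).symm
    _ = ∑ i, (#{v | f v = i} - t i) := by
        rw [card_compl, hS, hV, ← sum_tsub_distrib _ fun i _ => min_le_left _ _]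
        simp_rw [tsub_min]

omit [Fintype ι] in
lemma card_filter_le_card_filter_add_card_ne (N : Finset V) (f g : V → ι) (i : ι) :
    #{u ∈ N | f u = i} ≤ #{u ∈ N | g u = i} + #{v | f v ≠ g v} := by
  refine (card_le_card fun u hu => ?_).trans (card_union_le _ _)
  simp only [mem_filter, mem_union, mem_univ, true_and] at hu ⊢
  by_cases h : f u = g u
  · exact .inl ⟨hu.1, h ▸ hu.2⟩
  · exact .inr h

lemma exists_card_fiber_eq_forall_card_filter_le (f : V → ι) (t : ι → ℕ)
    (ht : ∑ i, t i = Fintype.card V) {m : ℝ} (hm : 0 ≤ m)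
    (hf : ∀ i, (#{v | f v = i} : ℝ) ≤ t i + m) :
    ∃ g : V → ι, (∀ i, #{v | g v = i} = t i) ∧ ∀ (N : Finset V) i,
      (#{u ∈ N | f u = i} : ℝ) ≤ #{u ∈ N | g u = i} + Fintype.card ι * m := by
  obtain ⟨g, hg, hfg⟩ := exists_card_fiber_eq_card_ne_le f t ht
  have hexcess (i : ι) : ((#{v | f v = i} - t i : ℕ) : ℝ) ≤ m := by
    rcases le_total #{v | f v = i} (t i) with h | h
    · rw [Nat.sub_eq_zero_of_le h, Nat.cast_zero]
      exact hm
    · rw [Nat.cast_sub h]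
      linarith [hf i]
  have hne : (#{v | f v ≠ g v} : ℝ) ≤ Fintype.card ι * m :=
    calc (#{v | f v ≠ g v} : ℝ) ≤ ∑ i, ((#{v | f v = i} - t i : ℕ) : ℝ) := by
          exact_mod_cast hfg
      _ ≤ Fintype.card ι * m := by
        simpa using sum_le_card_nsmul univ _ _ fun i _ => hexcess i
  refine ⟨g, hg, fun N i => ?_⟩
  have hN : (#{u ∈ N | f u = i} : ℝ) ≤ #{u ∈ N | g u = i} + #{v | f v ≠ g v} := by
    exact_mod_cast card_filter_le_card_filter_add_card_ne N f g i
  linarith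
end

lemma exists_sum_eq_forall_eq_div_or {k : ℕ} (hk : 0 < k) (n : ℕ) :
    ∃ t : Fin k → ℕ, ∑ i, t i = n ∧ ∀ i, t i = n / k ∨ t i = (n + k - 1) / k := by
  refine ⟨fun i => n / k + if (i : ℕ) < n % k then 1 else 0, ?_, fun i => ?_⟩
  · rw [sum_add_distrib, sum_const, sum_boole, card_univ, Fintype.card_fin,
      Fin.card_filter_val_lt, min_eq_right (Nat.mod_lt n hk).le, smul_eq_mul, Nat.cast_id,
      Nat.div_add_mod]
  · have hk1 : k - 1 < k := Nat.sub_lt hk one_pos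
    rw [Nat.add_sub_assoc hk, Nat.add_div hk, Nat.div_eq_of_lt hk1, Nat.mod_eq_of_lt hk1]
    dsimp only
    split_ifs <;> omega

lemma abs_natCast_sub_div_le_one {n k m : ℕ} (hk : 0 < k)
    (h : m = n / k ∨ m = (n + k - 1) / k) :
    |(m : ℝ) - n / k| ≤ 1 := by
  have hlo : (n : ℝ) / k - 1 < (n / k : ℕ) := by
    rw [← Nat.floor_div_eq_div (K := ℝ)]; exact Nat.sub_one_lt_floor _
  have hmono : n / k ≤ (n + k - 1) / k := Nat.div_le_div_right (by omega)
  have hhi : ((n + k - 1) / k : ℕ) ≤ (n : ℝ) / k + 1 := by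
    refine Nat.cast_div_le.trans ?_
    rw [div_add_one (by positivity), div_le_div_iff_of_pos_right (by positivity)]
    exact_mod_cast (by omega : n + k - 1 ≤ n + k)
  have hmono' : ((n / k : ℕ) : ℝ) ≤ ((n + k - 1) / k : ℕ) := by exact_mod_cast hmono
  rw [abs_sub_le_iff]
  rcases h with rfl | rfl <;> constructor <;> linarith [Nat.cast_div_le (α := ℝ) (m := n) (n := k)]

theorem stmt1 (α : ℝ) (hα : 0 < α) (k : ℕ) (hk : 1 ≤ k) :
    ∃ n₀ : ℕ, ∀ n : ℕ, n₀ ≤ n →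
      ∀ (V : Type) [Fintype V] [DecidableEq V] (G : SimpleGraph V) [DecidableRel G.Adj],
        Fintype.card V = n → (∀ v : V, α * n ≤ G.degree v) →
        ∃ U : Fin k → Finset V,
          (∀ i j : Fin k, i ≠ j → Disjoint (U i) (U j)) ∧
          (Finset.univ.biUnion U = Finset.univ) ∧
          (∀ i : Fin k, (U i).card = n / k ∨ (U i).card = (n + k - 1) / k) ∧
          (∀ (v : V) (i : Fin k),
            (α / 2) * (U i).card ≤ ((U i).filter (fun u => G.Adj v u)).card) := by
  have hk' : (0 : ℝ) < k := by exact_mod_cast hk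
  set ε := α / (16 * k ^ 2)
  have hc : 5 * α / (8 * k) * log 2 < α / (2 * k) := by
    rw [div_mul_eq_mul_div, div_lt_div_iff₀ (by positivity) (by positivity)]
    nlinarith [mul_lt_mul_of_pos_left log_two_lt_d9 (mul_pos hα hk')]
  obtain ⟨n₁, hcol⟩ :=
    exists_coloring_le_card_neighborFinset_filter hk hc (by positivity : 0 < ε)
  obtain ⟨n₂, hn₂⟩ := eventually_atTop.1 <| (tendsto_natCast_atTop_atTop.const_mul_atTop
    (by positivity : 0 < α / (16 * k))).eventually_ge_atTop (k + α / 2)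
  refine ⟨max n₁ n₂, fun n hn V _ _ G _ hV hδ => ?_⟩
  subst hV
  obtain ⟨f, hfdeg, hfsize⟩ := hcol V G (le_of_max_le_left hn) hδ
  obtain ⟨t, ht, hteq⟩ := exists_sum_eq_forall_eq_div_or hk (Fintype.card V)
  have htn (i : Fin k) := abs_sub_le_iff.1 (abs_natCast_sub_div_le_one hk (hteq i))
  obtain ⟨g, hg, hfg⟩ := exists_card_fiber_eq_forall_card_filter_le f t ht
    (m := ε * Fintype.card V + 1) (by positivity) fun i => by linarith [hfsize i, htn i]
  refine ⟨fun i => {v | g v = i},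
    fun i j hij => disjoint_filter.2 fun v _ hi hj => hij (hi.symm.trans hj),
    biUnion_filter_eq_of_maps_to fun v _ => mem_univ _, fun i => hg i ▸ hteq i, fun v i => ?_⟩
  have hadj : #{u ∈ ({u | g u = i} : Finset V) | G.Adj v u} =
      #{u ∈ G.neighborFinset v | g u = i} := by
    congr 1; ext u; simp [and_comm]
  have hloss := hfg (G.neighborFinset v) i
  have hsize : α / 2 * t i ≤ α / 2 * (Fintype.card V / k + 1) := by gcongr; linarith [htn i]
  have hε : (k : ℝ) * (ε * Fintype.card V + 1) = α / (16 * k) * Fintype.card V + k := by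
    simp only [ε]; field_simp
  rw [hg, hadj]
  rw [Fintype.card_fin] at hloss
  linear_combination hsize + hfdeg v i + hloss + hn₂ _ (le_of_max_le_right hn) + hε
end

section
/- If G is a connected graph on n vertices that is not Hamiltonian and satisfies |N_G(A)| ≥ 2|A| for every vertex set A with |A| ≤ R, then the number of boosters for G is at least R²/2. -/
/-- The length of a longest path in `G`. -/
noncomputable def maxPathLength {V : Type*} (G : SimpleGraph V) : ℕ :=
  sSup {l : ℕ | ∃ (u v : V) (p : G.Walk u v), p.IsPath ∧ p.length = l}

/-- A booster for `G` is a non-edge `s` such that adding `s` makes `G` Hamiltonian or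
strictly increases the length of a longest path. -/
noncomputable def IsBooster {V : Type*} [Fintype V] [DecidableEq V] (G : SimpleGraph V) (s : Sym2 V) : Prop :=
  ¬ s.IsDiag ∧ s ∉ G.edgeSet ∧
    ((G ⊔ SimpleGraph.fromEdgeSet {s}).IsHamiltonian ∨
      maxPathLength G < maxPathLength (G ⊔ SimpleGraph.fromEdgeSet {s}))

/-!
Pósa's rotation argument. Let `P` be a longest path from `a` to `b`. If the end `b` is adjacent
to a vertex `x` of `P`, then adding the edge `bx` and deleting the edge from `x` to its successor
`x⁺` on `P` yields another longest path from `a`, now ending at `x⁺`. Let `U` be the set of ends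
reachable by repeated rotations. A rotation only deletes an edge between the pivot and the new end,
so the `P`-edges at a vertex outside `U` with no `P`-neighbour in `U` are never destroyed; hence
every neighbour of `U` outside `U` is a `P`-neighbour of `U`, and `|N(U)| ≤ 2|U| - 1` because `b`
has only one `P`-neighbour. Expansion then forces `|U| > R`.

The two ends of a longest path form a booster: closing the path gives a cycle which, in a connected
graph, is either Hamiltonian or extends by one edge to a path as long as the cycle. Rotating first
from `a`, then from each of the more than `R` ends found, yields `(R + 1)²` ordered pairs of ends of
longest paths, hence at least `(R + 1)² / 2` boosters.
-/

open Finset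

lemma Finset.card_le_two_mul_card_image_sym2 {α : Type*} [DecidableEq α] (s : Finset (α × α)) :
    #s ≤ 2 * #(s.image fun x => s(x.1, x.2)) := by
  refine card_le_mul_card_image s 2 fun z _ => ?_
  induction z using Sym2.ind with | _ a b => ?_
  refine (card_le_card fun x hx => ?_).trans (card_le_two (a := (a, b)) (b := (b, a)))
  rcases (Sym2.mk_eq_mk_iff (p := x) (q := (a, b))).mp (mem_filter.mp hx).2 with rfl | rfl
  · exact mem_insert_self _ _
  · exact mem_insert_of_mem (mem_singleton_self _)

namespace SimpleGraph

variable {V : Type*} {G H : SimpleGraph V}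

def Walk.IsLongestPath {u v : V} (p : G.Walk u v) : Prop :=
  p.IsPath ∧ p.length = maxPathLength G

lemma Walk.IsLongestPath.reverse {u v : V} {p : G.Walk u v} (hp : p.IsLongestPath) :
    p.reverse.IsLongestPath :=
  ⟨hp.1.reverse, by rw [length_reverse, hp.2]⟩

def IsExpander [Fintype V] [DecidableEq V] (G : SimpleGraph V) [DecidableRel G.Adj] (R : ℕ) :
    Prop :=
  ∀ A : Finset V, #A ≤ R → 2 * #A ≤ #{v ∈ univ \ A | ∃ u ∈ A, G.Adj u v}

section LongestPath

variable [Fintype V]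

lemma bddAbove_pathLengths (G : SimpleGraph V) :
    BddAbove {l : ℕ | ∃ (u v : V) (p : G.Walk u v), p.IsPath ∧ p.length = l} :=
  ⟨Fintype.card V, by rintro _ ⟨u, v, p, hp, rfl⟩; exact hp.length_lt.le⟩

lemma Walk.IsPath.length_le_maxPathLength {u v : V} {p : G.Walk u v} (hp : p.IsPath) :
    p.length ≤ maxPathLength G :=
  le_csSup (bddAbove_pathLengths G) ⟨u, v, p, hp, rfl⟩

lemma exists_isLongestPath [Nonempty V] (G : SimpleGraph V) :
    ∃ (u v : V) (p : G.Walk u v), p.IsLongestPath := by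
  refine Nat.sSup_mem ?_ (bddAbove_pathLengths G)
  exact ⟨0, Classical.arbitrary V, _, .nil, .nil, rfl⟩

namespace Walk

variable {u v : V} {p : G.Walk u v}

lemma IsLongestPath.mem_support_of_adj {x : V} (hp : p.IsLongestPath) (hx : G.Adj v x) :
    x ∈ p.support := by
  by_contra hx'
  have := (hp.1.concat hx' hx).length_le_maxPathLength
  rw [length_concat, hp.2] at this
  omega

lemma IsLongestPath.degree_le [DecidableRel G.Adj] (hp : p.IsLongestPath) :
    G.degree v ≤ p.length := by
  classical
  have hsub : G.neighborFinset v ⊆ p.support.toFinset.erase v := fun x hx => by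
    rw [mem_neighborFinset] at hx
    exact mem_erase.mpr ⟨hx.ne', List.mem_toFinset.mpr (hp.mem_support_of_adj hx)⟩
  calc G.degree v = #(G.neighborFinset v) := (G.card_neighborFinset_eq_degree v).symm
    _ ≤ #(p.support.toFinset.erase v) := card_le_card hsub
    _ = p.length := by
      rw [card_erase_of_mem (List.mem_toFinset.mpr p.end_mem_support),
        List.toFinset_card_of_nodup hp.1.support_nodup, length_support, Nat.add_sub_cancel]

end Walk

lemma minDegree_le_maxPathLength [Nonempty V] [DecidableRel G.Adj] :
    G.minDegree ≤ maxPathLength G := by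
  obtain ⟨u, v, p, hp⟩ := exists_isLongestPath G
  exact (G.minDegree_le_degree v).trans (hp.2 ▸ hp.degree_le)

end LongestPath

section Booster

variable [DecidableEq V]

lemma Walk.IsCycle.isHamiltonianCycle_of_forall_mem_support {a : V} {c : G.Walk a a}
    (hc : c.IsCycle) (h : ∀ x, x ∈ c.support) : c.IsHamiltonianCycle := by
  refine isHamiltonianCycle_iff_isCycle_and_support_count_tail_eq_one.mpr ⟨hc, fun x => ?_⟩
  refine List.count_eq_one_of_mem hc.support_nodup ?_
  rcases (c.mem_support_iff).mp (h x) with rfl | hx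
  · exact end_mem_tail_support hc.not_nil
  · exact hx

lemma Walk.IsCycle.exists_isPath_length_eq {a y z : V} {c : G.Walk a a} (hc : c.IsCycle)
    (hy : y ∈ c.support) (hz : z ∉ c.support) (hyz : G.Adj y z) :
    ∃ (x : V) (q : G.Walk x z), q.IsPath ∧ q.length = c.length := by
  have hc' := hc.rotate hy
  refine ⟨_, (c.rotate y hy).tail.concat hyz, hc'.isPath_tail.concat ?_ hyz, ?_⟩
  · rw [support_tail_of_not_nil _ hc'.not_nil]
    exact fun h => hz (List.mem_of_mem_tail ((support_rotate c y hy).mem_iff.mp h))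
  · rw [length_concat, length_tail_add_one hc'.not_nil, length_rotate]

variable [Fintype V]

lemma Connected.isHamiltonian_or_exists_isPath_length_eq (hH : H.Connected) {a : V}
    {c : H.Walk a a} (hc : c.IsCycle) :
    H.IsHamiltonian ∨ ∃ (x y : V) (q : H.Walk x y), q.IsPath ∧ q.length = c.length := by
  by_cases hall : ∀ x, x ∈ c.support
  · exact Or.inl fun _ => ⟨a, c, hc.isHamiltonianCycle_of_forall_mem_support hall⟩
  obtain ⟨z, hz⟩ := not_forall.mp hall
  obtain ⟨d, -, hd, hd'⟩ :=
    (hH.preconnected a z).some.exists_boundary_dart {x | x ∈ c.support} c.start_mem_support hz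
  obtain ⟨x, q, hq⟩ := hc.exists_isPath_length_eq hd hd' d.adj
  exact Or.inr ⟨x, _, q, hq⟩

lemma Walk.IsLongestPath.isHamiltonian_or_maxPathLength_lt {u v : V} {p : G.Walk u v}
    (hp : p.IsLongestPath) (h2 : 2 ≤ p.length) (hGH : G ≤ H) (hH : H.Connected)
    (hadj : H.Adj v u) : H.IsHamiltonian ∨ maxPathLength G < maxPathLength H := by
  have hcyc : (cons hadj (p.mapLe hGH)).IsCycle := by
    rw [cons_isCycle_iff, edges_mapLe_eq_edges]
    refine ⟨hp.1.mapLe hGH, fun he => ?_⟩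
    have := hp.1.length_eq_one_of_mem_edges (Sym2.eq_swap ▸ he)
    omega
  refine (hH.isHamiltonian_or_exists_isPath_length_eq hcyc).imp_right ?_
  rintro ⟨x, y, q, hq, hlen⟩
  have := hq.length_le_maxPathLength
  rw [hlen, length_cons, length_mapLe, hp.2] at this
  omega

theorem isBooster_of_isLongestPath (hG : G.Connected) (hham : ¬ G.IsHamiltonian) {u v : V}
    {p : G.Walk u v} (hp : p.IsLongestPath) (h2 : 2 ≤ p.length) : IsBooster G s(u, v) := by
  have hne : u ≠ v := by
    rintro rfl
    have := (Walk.isPath_iff_nil.mp hp.1).length_eq_zero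
    omega
  have hnadj : ¬ G.Adj v u := fun hadj =>
    (hp.isHamiltonian_or_maxPathLength_lt h2 le_rfl hG hadj).elim hham (lt_irrefl _)
  refine ⟨Sym2.mk_isDiag_iff.not.mpr hne, fun h => hnadj (G.mem_edgeSet.mp h).symm, ?_⟩
  exact hp.isHamiltonian_or_maxPathLength_lt h2 le_sup_left (hG.mono le_sup_left)
    (Or.inr ⟨Set.mem_singleton_iff.mpr Sym2.eq_swap, hne.symm⟩)

end Booster

namespace Walk

variable [DecidableEq V] {a b w x : V}

def posaRotation (q : G.Walk a w) (hx : x ∈ q.support) (hadj : G.Adj w x) :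
    G.Walk a (q.dropUntil x hx).snd :=
  (q.takeUntil x hx).append (cons hadj.symm (q.dropUntil x hx).tail.reverse)

variable {q : G.Walk a w} (hx : x ∈ q.support) (hadj : G.Adj w x)

lemma support_posaRotation_perm : (q.posaRotation hx hadj).support.Perm q.support := by
  have hd : ¬(q.dropUntil x hx).Nil := not_nil_of_ne hadj.ne'
  have hq : q.support = (q.takeUntil x hx).support ++ (q.dropUntil x hx).tail.support := by
    conv_lhs => rw [← take_spec q hx]
    rw [support_append, support_tail_of_not_nil _ hd]
  rw [posaRotation, support_append, support_cons, List.tail_cons, support_reverse, hq]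
  exact List.Perm.append_left _ (List.reverse_perm _)

lemma IsLongestPath.posaRotation (hq : q.IsLongestPath) :
    (q.posaRotation hx hadj).IsLongestPath := by
  have hperm := support_posaRotation_perm hx hadj
  refine ⟨(isPath_def _).mpr (hperm.nodup_iff.mpr hq.1.support_nodup), ?_⟩
  have := hperm.length_eq
  rw [length_support, length_support] at this
  rw [← hq.2]
  omega

lemma mem_edges_posaRotation_iff {e : Sym2 V} :
    e ∈ (q.posaRotation hx hadj).edges ↔
      e ∈ (q.takeUntil x hx).edges ∨ e = s(x, w) ∨ e ∈ (q.dropUntil x hx).tail.edges := by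
  rw [posaRotation, edges_append, edges_cons, edges_reverse, List.mem_append, List.mem_cons,
    List.mem_reverse]

lemma mem_edges_iff_of_mem_support (hxw : x ≠ w) {e : Sym2 V} :
    e ∈ q.edges ↔ e ∈ (q.takeUntil x hx).edges
      ∨ e = s(x, (q.dropUntil x hx).snd) ∨ e ∈ (q.dropUntil x hx).tail.edges := by
  conv_lhs => rw [← take_spec q hx, ← cons_tail_eq (q.dropUntil x hx) (not_nil_of_ne hxw)]
  rw [edges_append, edges_cons, List.mem_append, List.mem_cons]

lemma mk_snd_dropUntil_mem_edges (hxw : x ≠ w) : s(x, (q.dropUntil x hx).snd) ∈ q.edges :=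
  (mem_edges_iff_of_mem_support hx hxw).mpr (Or.inr (Or.inl rfl))

inductive RotatesTo (p : G.Walk a b) : ∀ {w : V}, G.Walk a w → Prop
  | refl : RotatesTo p p
  | rotate {w x : V} {q : G.Walk a w} (hq : RotatesTo p q) (hx : x ∈ q.support)
      (hadj : G.Adj w x) : RotatesTo p (q.posaRotation hx hadj)

lemma RotatesTo.isLongestPath {p : G.Walk a b} (hp : p.IsLongestPath) {q : G.Walk a w}
    (h : p.RotatesTo q) : q.IsLongestPath := by
  induction h with
  | refl => exact hp
  | rotate _ hx hadj ih => exact ih.posaRotation hx hadj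

section PathEdges

variable [Fintype V] {p : G.Walk a b}

lemma IsPath.card_filter_mem_edges_le_two (hp : p.IsPath) (y : V) :
    #{z | s(y, z) ∈ p.edges} ≤ 2 := by
  by_cases hy : y ∈ p.support
  · refine (card_le_card fun z hz => ?_).trans
      (card_le_two (a := (p.takeUntil y hy).penultimate) (b := (p.dropUntil y hy).snd))
    rw [mem_filter, ← take_spec p hy, edges_append, List.mem_append] at hz
    rcases hz.2 with h | h
    · exact mem_insert.mpr (Or.inl ((hp.takeUntil hy).eq_penultimate_of_mem_edges h))
    · exact mem_insert_of_mem (mem_singleton.mpr ((hp.dropUntil hy).eq_snd_of_mem_edges h))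
  · rw [filter_false_of_mem fun z _ h => hy (p.fst_mem_support_of_mem_edges h), card_empty]
    omega

lemma IsPath.card_filter_mem_edges_end_le_one (hp : p.IsPath) :
    #{z | s(b, z) ∈ p.edges} ≤ 1 :=
  (card_le_card fun _ hz => mem_singleton.mpr
    (hp.eq_penultimate_of_mem_edges (mem_filter.mp hz).2)).trans (card_singleton _).le

end PathEdges

section RotationEnds

variable [Fintype V] {p : G.Walk a b}

open Classical in
noncomputable def rotationEnds (p : G.Walk a b) : Finset V :=
  {w | ∃ q : G.Walk a w, p.RotatesTo q}

lemma mem_rotationEnds : w ∈ p.rotationEnds ↔ ∃ q : G.Walk a w, p.RotatesTo q := by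
  simp [rotationEnds]

lemma RotatesTo.end_mem_rotationEnds {q : G.Walk a w} (h : p.RotatesTo q) :
    w ∈ p.rotationEnds :=
  mem_rotationEnds.mpr ⟨q, h⟩

/-- A rotation only changes edges at its pivot and at the old and new ends. The pivot is not `x`,
since the edge deleted at the pivot is an edge of `p` (by induction) leading to the new end. -/
lemma RotatesTo.mem_edges_iff {x : V} (hxU : x ∉ p.rotationEnds)
    (hxE : ∀ y ∈ p.rotationEnds, s(x, y) ∉ p.edges) {q : G.Walk a w} (h : p.RotatesTo q) :
    ∀ y, s(x, y) ∈ q.edges ↔ s(x, y) ∈ p.edges := by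
  have hne : ∀ {c d y : V}, x ≠ c → x ≠ d → s(x, y) ≠ s(c, d) := fun hc hd h =>
    (Sym2.mem_iff.mp (h ▸ Sym2.mem_mk_left x _)).elim hc hd
  induction h with
  | refl => exact fun _ => Iff.rfl
  | @rotate w' x' q' hq' hx' hadj' ih =>
    intro y
    have hnew := (hq'.rotate hx' hadj').end_mem_rotationEnds
    have hxx' : x ≠ x' := by
      rintro rfl
      exact hxE _ hnew ((ih _).mp (mk_snd_dropUntil_mem_edges hx' hadj'.ne'))
    have hxw' : x ≠ w' := fun h => hxU (h ▸ hq'.end_mem_rotationEnds)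
    have hxn : x ≠ (q'.dropUntil x' hx').snd := fun h => hxU (h ▸ hnew)
    have h1 := hne (y := y) hxx' hxw'
    have h2 := hne (y := y) hxx' hxn
    have h3 := mem_edges_iff_of_mem_support hx' hadj'.ne' (e := s(x, y))
    rw [mem_edges_posaRotation_iff, ← ih y]
    tauto

theorem IsLongestPath.exists_mem_rotationEnds_of_adj (hp : p.IsLongestPath) {x u : V}
    (hx : x ∉ p.rotationEnds) (hu : u ∈ p.rotationEnds) (hadj : G.Adj u x) :
    ∃ y ∈ p.rotationEnds, s(y, x) ∈ p.edges := by
  by_contra! hbad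
  obtain ⟨q, hq⟩ := mem_rotationEnds.mp hu
  have hxq : x ∈ q.support := (hq.isLongestPath hp).mem_support_of_adj hadj
  have hedge := (hq.mem_edges_iff hx (fun y hy => Sym2.eq_swap ▸ hbad y hy) _).mp
    (mk_snd_dropUntil_mem_edges hxq hadj.ne')
  exact hbad _ (hq.rotate hxq hadj).end_mem_rotationEnds (Sym2.eq_swap ▸ hedge)

end RotationEnds

end Walk

theorem IsExpander.lt_card_rotationEnds [Fintype V] [DecidableEq V] [DecidableRel G.Adj] {R : ℕ}
    (hG : G.IsExpander R) {a b : V} {p : G.Walk a b} (hp : p.IsLongestPath) :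
    R < #p.rotationEnds := by
  set A := p.rotationEnds
  by_contra! hA
  have hb : b ∈ A := Walk.RotatesTo.refl.end_mem_rotationEnds
  have hN :
      {x ∈ univ \ A | ∃ u ∈ A, G.Adj u x} ⊆ A.biUnion fun y => {z | s(y, z) ∈ p.edges} := by
    intro x hx
    simp only [mem_filter, mem_sdiff, mem_univ, true_and] at hx
    obtain ⟨hxA, u, hu, hux⟩ := hx
    obtain ⟨y, hy, hyx⟩ := hp.exists_mem_rotationEnds_of_adj hxA hu hux
    exact mem_biUnion.mpr ⟨y, hy, mem_filter.mpr ⟨mem_univ _, hyx⟩⟩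
  have hcount : #(A.biUnion fun y => {z | s(y, z) ∈ p.edges}) + 1 ≤ 2 * #A := calc
    _ ≤ ∑ y ∈ A, #{z | s(y, z) ∈ p.edges} + 1 := by gcongr; exact card_biUnion_le
    _ = ∑ y ∈ A.erase b, #{z | s(y, z) ∈ p.edges} + #{z | s(b, z) ∈ p.edges} + 1 := by
      rw [sum_erase_add _ _ hb]
    _ ≤ #(A.erase b) * 2 + 1 + 1 := by
      gcongr
      · exact sum_le_card_nsmul _ _ _ fun y _ => hp.1.card_filter_mem_edges_le_two y
      · exact hp.1.card_filter_mem_edges_end_le_one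
    _ = 2 * #A := by
      rw [card_erase_of_mem hb]
      have := card_pos.mpr ⟨b, hb⟩
      omega
  have := card_le_card hN
  have := hG A hA
  omega

section LongestPathEnds

variable [Fintype V] {u w : V}

open Classical in
noncomputable def longestPathEnds (G : SimpleGraph V) (u : V) : Finset V :=
  {w | ∃ p : G.Walk u w, p.IsLongestPath}

lemma mem_longestPathEnds : w ∈ G.longestPathEnds u ↔ ∃ p : G.Walk u w, p.IsLongestPath := by
  simp [longestPathEnds]

lemma mem_longestPathEnds_comm : w ∈ G.longestPathEnds u ↔ u ∈ G.longestPathEnds w := by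
  simp only [mem_longestPathEnds]
  constructor <;> exact fun ⟨p, hp⟩ => ⟨p.reverse, hp.reverse⟩

variable [DecidableEq V] [DecidableRel G.Adj] {R : ℕ}

lemma IsExpander.lt_card_longestPathEnds (hG : G.IsExpander R) (hu : u ∈ G.longestPathEnds w) :
    R < #(G.longestPathEnds u) := by
  obtain ⟨p, hp⟩ := mem_longestPathEnds.mp (mem_longestPathEnds_comm.mp hu)
  refine (hG.lt_card_rotationEnds hp).trans_le (card_le_card fun v hv => ?_)
  obtain ⟨q, hq⟩ := Walk.mem_rotationEnds.mp hv
  exact mem_longestPathEnds.mpr ⟨q, hq.isLongestPath hp⟩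

lemma IsExpander.two_le_degree (hG : G.IsExpander R) (hR : 0 < R) (v : V) : 2 ≤ G.degree v := by
  have h := hG {v} (by rwa [card_singleton])
  have hN : {x ∈ univ \ {v} | ∃ u ∈ ({v} : Finset V), G.Adj u x} = G.neighborFinset v := by
    ext x
    simp only [mem_filter, mem_sdiff, mem_univ, true_and, mem_singleton, exists_eq_left,
      mem_neighborFinset]
    exact ⟨And.right, fun h => ⟨h.ne', h⟩⟩
  rwa [hN, card_neighborFinset_eq_degree, card_singleton, mul_one] at h

end LongestPathEnds

end SimpleGraph

open SimpleGraph in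
theorem stmt3_general {V : Type*} [Fintype V] [DecidableEq V] (G : SimpleGraph V)
    [DecidableRel G.Adj] (R : ℕ)
    (hconn : G.Connected) (hham : ¬ G.IsHamiltonian)
    (hexp : ∀ A : Finset V, A.card ≤ R →
      2 * A.card ≤ ((Finset.univ \ A).filter (fun v => ∃ u ∈ A, G.Adj u v)).card) :
    ((R : ℝ) ^ 2) / 2 ≤ ({s : Sym2 V | IsBooster G s}.ncard : ℝ) := by
  rcases Nat.eq_zero_or_pos R with rfl | hR
  · simp
  have : Nonempty V := hconn.nonempty
  have hG : G.IsExpander R := hexp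
  have h2 : 2 ≤ maxPathLength G :=
    (G.le_minDegree_of_forall_le_degree 2 (hG.two_le_degree hR)).trans minDegree_le_maxPathLength
  obtain ⟨a, b, p, hp⟩ := exists_isLongestPath G
  have ha : a ∈ G.longestPathEnds b := mem_longestPathEnds.mpr ⟨p.reverse, hp.reverse⟩
  let E := ((G.longestPathEnds a).sigma G.longestPathEnds).map
    (Equiv.sigmaEquivProd V V).toEmbedding
  have hE : (R + 1) * (R + 1) ≤ #E := by
    rw [card_map, card_sigma, ← smul_eq_mul]
    exact (nsmul_le_nsmul_left (by omega) (hG.lt_card_longestPathEnds ha)).trans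
      (card_nsmul_le_sum _ _ _ fun u hu => hG.lt_card_longestPathEnds hu)
  have hB : (E.image (fun x => s(x.1, x.2)) : Set (Sym2 V)) ⊆ {s | IsBooster G s} := by
    intro s hs
    simp only [E, coe_image, Set.mem_image, mem_coe, mem_map, mem_sigma] at hs
    obtain ⟨-, ⟨⟨u, w⟩, ⟨-, hw⟩, rfl⟩, rfl⟩ := hs
    obtain ⟨q, hq⟩ := mem_longestPathEnds.mp hw
    exact isBooster_of_isLongestPath hconn hham hq (hq.2 ▸ h2)
  have hcard := (card_le_two_mul_card_image_sym2 E).trans <| Nat.mul_le_mul_left 2 <|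
    (Set.ncard_coe_finset _).symm.trans_le (Set.ncard_le_ncard hB (Set.toFinite _))
  rw [div_le_iff₀ two_pos]
  exact_mod_cast (by nlinarith : R ^ 2 ≤ {s : Sym2 V | IsBooster G s}.ncard * 2)

theorem stmt3 {V : Type*} [Fintype V] [DecidableEq V] (G : SimpleGraph V)
    [DecidableRel G.Adj] (n R : ℕ) (hn : Fintype.card V = n)
    (hconn : G.Connected) (hham : ¬ G.IsHamiltonian)
    (hexp : ∀ A : Finset V, A.card ≤ R →
      2 * A.card ≤ ((Finset.univ \ A).filter (fun v => ∃ u ∈ A, G.Adj u v)).card) :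
    ((R : ℝ) ^ 2) / 2 ≤ ({s : Sym2 V | IsBooster G s}.ncard : ℝ) :=
  stmt3_general G R hconn hham hexp
end

section
/- Let k ≥ 1, let M be a graph whose vertex set is partitioned as V = V₁ ∪ ... ∪ V_s with s ≥ 1, and suppose: (a) the induced subgraph M[V_i] is k-vertex-connected for every i ∈ [s], and (b) for every i ∈ [s−1], M contains a matching of size k between V_i and V_s. Then M is k-vertex-connected. -/
/-!
Deleting a set `K` of fewer than `k` vertices leaves every part `V_i` connected, and it misses
both endpoints of some edge of each matching, since the `2k` endpoints are distinct. That edge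
links what survives of `V_i` to what survives of `V_s`, so every surviving vertex reaches a
fixed surviving vertex of `V_s`.
-/

/-- A graph is `k`-vertex-connected if it has more than `k` vertices and removing any
set of at most `k - 1` vertices leaves a connected graph. -/
def IsKConnected {V : Type*} [Fintype V] (G : SimpleGraph V) (k : ℕ) : Prop :=
  k < Fintype.card V ∧
    ∀ K : Finset V, K.card < k → (G.induce ((↑K : Set V)ᶜ)).Connected

theorem exists_fst_notMem_and_snd_notMem_of_card_lt {V : Type*} {k : ℕ} {K : Finset V}
    (hK : K.card < k) (e : Fin k → V × V)
    (he : ∀ j j' : Fin k, j ≠ j' →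
      (e j).1 ≠ (e j').1 ∧ (e j).1 ≠ (e j').2 ∧ (e j).2 ≠ (e j').1 ∧ (e j).2 ≠ (e j').2) :
    ∃ j, (e j).1 ∉ K ∧ (e j).2 ∉ K := by
  classical
  -- Otherwise choosing an endpoint in `K` of every edge would inject `Fin k` into `K`.
  by_contra! hall
  let g : Fin k → V := fun j => if (e j).1 ∈ K then (e j).1 else (e j).2
  have hg : ∀ j ∈ (Finset.univ : Finset (Fin k)), g j ∈ K := fun j _ => by
    by_cases h : (e j).1 ∈ K <;> simp [g, h, hall j]
  obtain ⟨j, -, j', -, hjj', hgj⟩ :=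
    Finset.exists_ne_map_eq_of_card_lt_of_maps_to (by simpa using hK) hg
  obtain ⟨h11, h12, h21, h22⟩ := he j j' hjj'
  simp only [g] at hgj
  split_ifs at hgj <;> contradiction

namespace IsKConnected

variable {V : Type*} {G : SimpleGraph V} {k : ℕ} {A B K : Finset V}

theorem reachable_induce_compl (hA : IsKConnected (G.induce (A : Set V)) k)
    (hK : K.card < k) {x y : V} (hx : x ∈ A) (hy : y ∈ A) (hxK : x ∉ K) (hyK : y ∉ K) :
    (G.induce (K : Set V)ᶜ).Reachable ⟨x, hxK⟩ ⟨y, hyK⟩ := by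
  classical
  let K' : Finset (A : Set V) := K.subtype (· ∈ (A : Set V))
  have hK' : K'.card < k := ((K.card_subtype _).trans_le (K.card_filter_le _)).trans_lt hK
  let f : (G.induce (A : Set V)).induce (K' : Set (A : Set V))ᶜ →g G.induce (K : Set V)ᶜ :=
    ⟨fun a => ⟨a.1.1, fun h => a.2 (Finset.mem_subtype.2 h)⟩, id⟩
  exact ((hA.2 K' hK').preconnected ⟨⟨x, hx⟩, by simpa [K'] using hxK⟩
    ⟨⟨y, hy⟩, by simpa [K'] using hyK⟩).map f

theorem reachable_of_matching (hA : IsKConnected (G.induce (A : Set V)) k)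
    (hB : IsKConnected (G.induce (B : Set V)) k) (hK : K.card < k) (e : Fin k → V × V)
    (heAdj : ∀ j, (e j).1 ∈ A ∧ (e j).2 ∈ B ∧ G.Adj (e j).1 (e j).2)
    (he : ∀ j j' : Fin k, j ≠ j' →
      (e j).1 ≠ (e j').1 ∧ (e j).1 ≠ (e j').2 ∧ (e j).2 ≠ (e j').1 ∧ (e j).2 ≠ (e j').2)
    {x y : V} (hx : x ∈ A) (hy : y ∈ B) (hxK : x ∉ K) (hyK : y ∉ K) :
    (G.induce (K : Set V)ᶜ).Reachable ⟨x, hxK⟩ ⟨y, hyK⟩ := by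
  obtain ⟨j, hj₁, hj₂⟩ := exists_fst_notMem_and_snd_notMem_of_card_lt hK e he
  obtain ⟨hjA, hjB, hjAdj⟩ := heAdj j
  have hjReach : (G.induce (K : Set V)ᶜ).Reachable ⟨(e j).1, hj₁⟩ ⟨(e j).2, hj₂⟩ :=
    SimpleGraph.Adj.reachable hjAdj
  exact (hA.reachable_induce_compl hK hx hjA hxK hj₁).trans
    (hjReach.trans (hB.reachable_induce_compl hK hjB hy hj₂ hyK))

end IsKConnected

theorem stmt7 {V : Type*} [Fintype V] [DecidableEq V] (M : SimpleGraph V)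
    (k s : ℕ) (hs : 1 ≤ s) (U : Fin s → Finset V)
    (hunion : Finset.univ.biUnion U = Finset.univ)
    (hconn : ∀ i : Fin s, IsKConnected (M.induce (↑(U i) : Set V)) k)
    (hmatch : ∀ i : Fin s, (i : ℕ) < s - 1 →
      ∃ e : Fin k → V × V,
        (∀ j : Fin k, (e j).1 ∈ U i ∧ (e j).2 ∈ U ⟨s - 1, by omega⟩ ∧
          M.Adj (e j).1 (e j).2) ∧
        (∀ j j' : Fin k, j ≠ j' →
          (e j).1 ≠ (e j').1 ∧ (e j).1 ≠ (e j').2 ∧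
          (e j).2 ≠ (e j').1 ∧ (e j).2 ≠ (e j').2)) :
    IsKConnected M k := by
  set L : Fin s := ⟨s - 1, by omega⟩
  have hkL : k < (U L).card := by simpa using (hconn L).1
  refine ⟨hkL.trans_le (Finset.card_le_univ _), fun K hK => ?_⟩
  obtain ⟨w, hwL, hwK⟩ := Finset.exists_mem_notMem_of_card_lt_card (hK.trans hkL)
  refine (SimpleGraph.connected_iff_exists_forall_reachable _).2 ⟨⟨w, hwK⟩, fun ⟨v, hvK⟩ => ?_⟩
  obtain ⟨i, hvi⟩ : ∃ i, v ∈ U i :=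
    Finset.mem_biUnion.1 (hunion.symm ▸ Finset.mem_univ v) |>.imp fun _ => And.right
  refine SimpleGraph.Reachable.symm ?_
  by_cases hiL : i = L
  · exact (hconn L).reachable_induce_compl hK (hiL ▸ hvi) hwL hvK hwK
  · have hi : (i : ℕ) < s - 1 := by
      have : (i : ℕ) ≠ s - 1 := fun h => hiL (Fin.ext h)
      omega
    obtain ⟨e, heAdj, he⟩ := hmatch i hi
    exact (hconn i).reachable_of_matching (hconn L) hK e heAdj he hvi hwL hvK hwK
end

section
/- Let 0 < ε ≤ 1/5 and let G be a graph on n vertices such that (i) |N_G(A)| ≥ 2|A| for every set A with |A| ≤ εn, and (ii) there is at least one edge between any two disjoint vertex sets of size exactly ⌈εn⌉. Then G is connected and |N_G(A)| ≥ 2|A| for every set A with |A| ≤ n/5. -/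
/-!
If `εn < |A| ≤ n/5`, then by (ii) fewer than `⌈εn⌉` vertices outside `A` have no neighbour in
`A`, so `|N(A)| > n - |A| - εn ≥ 2|A|`. A connected component has no external neighbours, so
expansion forces it to have more than `n/5 ≥ εn` vertices, and by (ii) two such components
would be joined by an edge.
-/

open Finset

namespace SimpleGraph

variable {V : Type*} (G : SimpleGraph V)

def HasEdgeBetweenDisjointOfCard (m : ℕ) : Prop :=
  ∀ A B : Finset V, Disjoint A B → #A = m → #B = m → ∃ u ∈ A, ∃ w ∈ B, G.Adj u w

theorem exists_adj_of_le_card {m : ℕ} (hG : G.HasEdgeBetweenDisjointOfCard m)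
    {A B : Finset V} (hAB : Disjoint A B) (hA : m ≤ #A) (hB : m ≤ #B) :
    ∃ u ∈ A, ∃ w ∈ B, G.Adj u w := by
  obtain ⟨A', hA'A, hA'⟩ := exists_subset_card_eq hA
  obtain ⟨B', hB'B, hB'⟩ := exists_subset_card_eq hB
  obtain ⟨u, hu, w, hw, huw⟩ := hG A' B' (hAB.mono hA'A hB'B) hA' hB'
  exact ⟨u, hA'A hu, w, hB'B hw, huw⟩

variable [Fintype V] [DecidableEq V] [DecidableRel G.Adj]

def extNeighborFinset (A : Finset V) : Finset V :=
  (univ \ A).filter fun v => ∃ u ∈ A, G.Adj u v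

theorem extNeighborFinset_filter_reachable (u : V) :
    G.extNeighborFinset (univ.filter (G.Reachable u)) = ∅ := by
  refine eq_empty_of_forall_notMem fun v hv => ?_
  simp only [extNeighborFinset, mem_filter, mem_sdiff, mem_univ, true_and] at hv
  obtain ⟨hv, w, huw, hwv⟩ := hv
  exact hv (huw.trans hwv.reachable)

theorem card_lt_card_extNeighborFinset_add {m : ℕ} (hG : G.HasEdgeBetweenDisjointOfCard m)
    {A : Finset V} (hA : m ≤ #A) :
    Fintype.card V < #(G.extNeighborFinset A) + #A + m := by
  set S := (univ \ A).filter fun v => ¬∃ u ∈ A, G.Adj u v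
  have hS : #S < m := by
    by_contra! hmS
    have hdisj : Disjoint A S :=
      Finset.disjoint_left.2 fun _ hxA hxS => (mem_sdiff.1 (mem_filter.1 hxS).1).2 hxA
    obtain ⟨u, hu, w, hw, huw⟩ := G.exists_adj_of_le_card hG hdisj hA hmS
    exact (mem_filter.1 hw).2 ⟨u, hu, huw⟩
  have hsplit : #(G.extNeighborFinset A) + #S = Fintype.card V - #A := by
    rw [extNeighborFinset, card_filter_add_card_filter_not, card_univ_sdiff]
  have := card_le_univ A
  omega

theorem connected_of_forall_le_card_filter_reachable [Nonempty V] {m : ℕ} (hG : G.HasEdgeBetweenDisjointOfCard m)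
    (hcomp : ∀ u, m ≤ #(univ.filter (G.Reachable u))) : G.Connected := by
  refine (connected_iff G).2 ⟨fun u v => ?_, ‹_›⟩
  by_contra huv
  have hdisj : Disjoint (univ.filter (G.Reachable u)) (univ.filter (G.Reachable v)) :=
    disjoint_filter.2 fun x _ hux hvx => huv (hux.trans hvx.symm)
  obtain ⟨a, ha, b, hb, hab⟩ := G.exists_adj_of_le_card hG hdisj (hcomp u) (hcomp v)
  simp only [mem_filter, mem_univ, true_and] at ha hb
  exact huv ((ha.trans hab.reachable).trans hb.symm)

theorem lt_card_filter_reachable {r : ℝ}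
    (hexp : ∀ A : Finset V, (#A : ℝ) ≤ r → 2 * #A ≤ #(G.extNeighborFinset A)) (u : V) :
    r < #(univ.filter (G.Reachable u)) := by
  by_contra! h
  have hclosed := hexp _ h
  rw [extNeighborFinset_filter_reachable, card_empty] at hclosed
  have hu : (univ.filter (G.Reachable u)).Nonempty := ⟨u, by simp⟩
  have := hu.card_pos
  omega

end SimpleGraph

theorem stmt9 {V : Type*} [Fintype V] [DecidableEq V] (G : SimpleGraph V)
    [DecidableRel G.Adj] (n : ℕ) (hn : Fintype.card V = n) (ε : ℝ)
    (hε0 : 0 < ε) (hε : ε ≤ 1 / 5)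
    (hexp : ∀ A : Finset V, (A.card : ℝ) ≤ ε * n →
      2 * A.card ≤ ((Finset.univ \ A).filter (fun v => ∃ u ∈ A, G.Adj u v)).card)
    (hedge : ∀ A B : Finset V, Disjoint A B → A.card = ⌈ε * n⌉₊ → B.card = ⌈ε * n⌉₊ →
      ∃ u ∈ A, ∃ w ∈ B, G.Adj u w) :
    G.Connected ∧
      ∀ A : Finset V, (A.card : ℝ) ≤ (n : ℝ) / 5 →
        2 * A.card ≤ ((Finset.univ \ A).filter (fun v => ∃ u ∈ A, G.Adj u v)).card := by
  have hεn : ε * n ≤ n / 5 := by nlinarith [n.cast_nonneg (α := ℝ)]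
  have hexp' : ∀ A : Finset V, (#A : ℝ) ≤ n / 5 → 2 * #A ≤ #(G.extNeighborFinset A) := by
    intro A hA
    rcases le_or_gt (#A : ℝ) (ε * n) with hsmall | hlarge
    · exact hexp A hsmall
    have hcard := G.card_lt_card_extNeighborFinset_add hedge (Nat.ceil_le.2 hlarge.le)
    have hceil : (⌈ε * n⌉₊ : ℝ) < ε * n + 1 := Nat.ceil_lt_add_one (by positivity)
    rw [hn, Nat.lt_iff_add_one_le, ← Nat.cast_le (α := ℝ)] at hcard
    push_cast at hcard
    exact_mod_cast (by linarith : (2 * #A : ℝ) ≤ #(G.extNeighborFinset A))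
  refine ⟨?_, hexp'⟩
  -- For `n = 0` the hypothesis on pairs of `0`-sets would demand an edge between `∅` and `∅`.
  have : Nonempty V := by
    by_contra! hV
    obtain ⟨u, hu, -⟩ := hedge ∅ ∅ (disjoint_empty_left _) (by simp [← hn]) (by simp [← hn])
    exact notMem_empty u hu
  refine G.connected_of_forall_le_card_filter_reachable hedge fun u => Nat.ceil_le.2 ?_
  linarith [G.lt_card_filter_reachable hexp' u]
end
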